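/- arXiv:1604.00845 — 2 statements merged into one kernel-verified Lean document; each statement's English description precedes it below -/
import Mathlib

section
/- Let Σ ∈ M_{d×d}, q ∈ [n]^d, let H = (π_{Σ,q}, B, F) be a hashing with filter G, let x' ∈ ℂ^{[n]^d}, and let i ∈ [n]^d be such that G_{o_i(i)} ≠ 0. If a is drawn uniformly at random from [n]^d, then E_a[ | G_{o_i(i)}^{−1} · ω^{−a^T Σ i} · Σ_{j∈[n]^d} G_{o_i(j)} x'_j ω^{a^T Σ j} − x'_i |² ] = G_{o_i(i)}^{−2} · Σ_{j∈[n]^d∖{i}} G_{o_i(j)}² |x'_j|². -/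
/-
The characters `a ↦ ω^{aᵀΣj}` are pairwise distinct because an odd determinant makes `Σ`
invertible over `ℤ/2^mℤ`, so they are orthogonal on `[n]^d`. Multiplying the estimation
error by the unimodular `ω^{aᵀΣi}` turns it into a trigonometric polynomial in `a` whose
coefficient at `i` vanishes, and Parseval's identity computes its mean square.
-/

open scoped BigOperators Classical
open Finset

noncomputable def fe (n : ℕ) (t : ZMod n) : ℂ :=
  Complex.exp (2 * (Real.pi : ℂ) * Complex.I * ((t.val : ℕ) : ℂ) / (n : ℂ))

def fdot {n d : ℕ} (i j : Fin d → ZMod n) : ZMod n := ∑ s, i s * j s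

def fperm {n d : ℕ} (M : Matrix (Fin d) (Fin d) (ZMod n)) (q : Fin d → ZMod n)
    (i : Fin d → ZMod n) : Fin d → ZMod n := M.mulVec (i - q)

def bucketPt {n d : ℕ} (nb : ℕ) (v : Fin d → ZMod n) : Fin d → ZMod n :=
  fun s => ((nb * ((v s).val / nb) : ℕ) : ZMod n)

/-- the offset o_i(j) = π(j) − (n/b)·h(i), with nb = n/b -/
def opos {n d : ℕ} (nb : ℕ) (M : Matrix (Fin d) (Fin d) (ZMod n)) (q : Fin d → ZMod n)
    (i j : Fin d → ZMod n) : Fin d → ZMod n :=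
  fperm M q j - bucketPt nb (fperm M q i)

open scoped ComplexConjugate
open Function

namespace AddChar

section Orthogonality
variable {A K : Type*} [AddCommGroup A] [Fintype A] [RCLike K]

lemma sum_apply_mul_conj_apply (ψ φ : AddChar A K) :
    ∑ a, ψ a * conj (φ a) = if ψ = φ then (Fintype.card A : K) else 0 := by
  simp_rw [← inv_apply_eq_conj, ← inv_apply', ← mul_apply, sum_eq_ite, ← one_eq_zero,
    mul_inv_eq_one]

theorem sum_norm_sq_sum_mul_apply {ι : Type*} [Fintype ι] {ψ : ι → AddChar A K}
    (hψ : Injective ψ) (c : ι → K) :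
    ∑ a, ‖∑ j, c j * ψ j a‖ ^ 2 = Fintype.card A * ∑ j, ‖c j‖ ^ 2 := by
  apply RCLike.ofReal_injective (K := K)
  push_cast
  calc ∑ a, ((‖∑ j, c j * ψ j a‖ : K)) ^ 2
      = ∑ j, ∑ k, c j * conj (c k) * ∑ a, ψ j a * conj (ψ k a) := by
        simp_rw [← RCLike.mul_conj, map_sum, map_mul, sum_mul_sum, mul_sum]
        rw [sum_comm]
        refine sum_congr rfl fun j _ => ?_
        rw [sum_comm]
        exact sum_congr rfl fun k _ => sum_congr rfl fun a _ => by ring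
    _ = Fintype.card A * ∑ j, (‖c j‖ : K) ^ 2 := by
        simp_rw [sum_apply_mul_conj_apply, hψ.eq_iff, mul_ite, mul_zero, sum_ite_eq, mem_univ,
          if_true, mul_sum, RCLike.mul_conj, mul_comm]

theorem sum_norm_sq_inv_mul_sum_sub {ι : Type*} [Fintype ι] [DecidableEq ι]
    {ψ : ι → AddChar A K} (hψ : Injective ψ) (g : ι → ℝ) (x : ι → K) {i : ι} (hg : g i ≠ 0) :
    ∑ a, ‖(g i : K)⁻¹ * (ψ i a)⁻¹ * (∑ j, (g j : K) * x j * ψ j a) - x i‖ ^ 2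
      = Fintype.card A * ((g i)⁻¹ ^ 2 * ∑ j ∈ univ.erase i, g j ^ 2 * ‖x j‖ ^ 2) := by
  set c : ι → K := fun j => (g i : K)⁻¹ * g j * x j - Pi.single (M := fun _ => K) i (x i) j
  have hsummand (a : A) :
      ‖(g i : K)⁻¹ * (ψ i a)⁻¹ * (∑ j, (g j : K) * x j * ψ j a) - x i‖
        = ‖∑ j, c j * ψ j a‖ := by
    have hψi : ‖ψ i a‖ = 1 := (ψ i).norm_apply a
    have hψi' : ψ i a ≠ 0 := norm_ne_zero_iff.mp (by simp [hψi])
    calc _ = ‖ψ i a * ((g i : K)⁻¹ * (ψ i a)⁻¹ * (∑ j, (g j : K) * x j * ψ j a) - x i)‖ := by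
          rw [norm_mul, hψi, one_mul]
      _ = ‖(g i : K)⁻¹ * (∑ j, (g j : K) * x j * ψ j a) - x i * ψ i a‖ := by
          congr 1
          field_simp
      _ = ‖∑ j, c j * ψ j a‖ := by
          simp only [c, sub_mul, sum_sub_distrib, Pi.single_apply, ite_mul, zero_mul,
            sum_ite_eq', mem_univ, if_true, mul_sum, mul_assoc]
  have hci : c i = 0 := by simp [c, hg]
  have hc (j : ι) (hj : j ≠ i) : ‖c j‖ ^ 2 = (g i)⁻¹ ^ 2 * (g j ^ 2 * ‖x j‖ ^ 2) := by
    simp [c, hj, norm_mul, mul_pow, mul_assoc]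
  simp only [hsummand, sum_norm_sq_sum_mul_apply hψ]
  congr 1
  rw [← add_sum_erase _ _ (mem_univ i), hci, norm_zero, sq, zero_mul, zero_add, mul_sum]
  exact sum_congr rfl fun j hj => hc j (ne_of_mem_erase hj)

end Orthogonality

section DotProduct
variable {R M ι : Type*} [CommRing R] [Fintype ι]

def dotProductChar [CommMonoid M] (ψ : AddChar R M) (v : ι → R) : AddChar (ι → R) M :=
  ψ.compAddMonoidHom (AddMonoidHom.mk' (· ⬝ᵥ v) fun a b => add_dotProduct a b v)

@[simp]
lemma dotProductChar_apply [CommMonoid M] (ψ : AddChar R M) (v a : ι → R) :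
    dotProductChar ψ v a = ψ (a ⬝ᵥ v) := rfl

lemma IsPrimitive.dotProductChar_injective [DivisionCommMonoid M] [DecidableEq ι]
    {ψ : AddChar R M} (hψ : ψ.IsPrimitive) :
    Injective (dotProductChar ψ : (ι → R) → AddChar (ι → R) M) := by
  intro v w hvw
  funext s
  by_contra hs
  refine hψ (sub_ne_zero.mpr hs) (AddChar.ext _ _ fun x => ?_)
  have hx := DFunLike.congr_fun hvw (Pi.single s x)
  simp only [dotProductChar_apply, single_dotProduct] at hx
  rw [mulShift_apply, one_apply, sub_mul, mul_comm (v s), mul_comm (w s), map_sub_eq_div, hx,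
    ← map_sub_eq_div, sub_self, map_zero_eq_one]

end DotProduct
end AddChar

lemma ZMod.isUnit_of_odd_val {k : ℕ} {x : ZMod (2 ^ k)} (hx : Odd x.val) : IsUnit x := by
  rw [← ZMod.natCast_zmod_val x, ZMod.isUnit_iff_coprime]
  exact (Nat.coprime_two_right.mpr hx).pow_right k

lemma fe_eq_stdAddChar {n : ℕ} [NeZero n] (t : ZMod n) : fe n t = ZMod.stdAddChar t := by
  rw [ZMod.stdAddChar_apply, ZMod.toCircle_apply]
  rfl

lemma fdot_eq_dotProduct {n d : ℕ} (a v : Fin d → ZMod n) : fdot a v = a ⬝ᵥ v := rfl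

theorem stmt8_general {n d mn : ℕ} [NeZero n] (hn : n = 2 ^ mn)
    (b : ℕ)
    (M : Matrix (Fin d) (Fin d) (ZMod n)) (hM : Odd (Matrix.det M).val)
    (q : Fin d → ZMod n) (G : (Fin d → ZMod n) → ℝ)
    (x' : (Fin d → ZMod n) → ℂ) (i : Fin d → ZMod n)
    (hG : G (opos (n / b) M q i i) ≠ 0) :
    (∑ a : Fin d → ZMod n,
        ‖(((G (opos (n / b) M q i i) : ℝ) : ℂ)⁻¹ * fe n (-(fdot a (M.mulVec i))) *
              (∑ j, ((G (opos (n / b) M q i j) : ℝ) : ℂ) * x' j * fe n (fdot a (M.mulVec j)))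
            - x' i)‖ ^ 2) / (n : ℝ) ^ d
      = (G (opos (n / b) M q i i))⁻¹ ^ 2 *
          ∑ j ∈ univ.erase i, G (opos (n / b) M q i j) ^ 2 * ‖x' j‖ ^ 2 := by
  have hψ : Injective fun j ↦ AddChar.dotProductChar (ZMod.stdAddChar (N := n)) (M.mulVec j) := by
    subst hn
    have hMunit : IsUnit M := M.isUnit_iff_isUnit_det.2 (ZMod.isUnit_of_odd_val hM)
    exact (ZMod.isPrimitive_stdAddChar _).dotProductChar_injective.comp
      (Matrix.mulVec_injective_of_isUnit hMunit)
  have hrecovery := AddChar.sum_norm_sq_inv_mul_sum_sub hψ (fun j => G (opos (n / b) M q i j)) x' hG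
  simp only [AddChar.dotProductChar_apply, ← fdot_eq_dotProduct] at hrecovery
  simp_rw [fe_eq_stdAddChar, AddChar.map_neg_eq_inv]
  have hcard : (Fintype.card (Fin d → ZMod n) : ℝ) = (n : ℝ) ^ d := by simp
  rw [div_eq_iff (pow_ne_zero d (Nat.cast_ne_zero.mpr (NeZero.ne n))), mul_comm, ← hcard]
  -- not `rw`: the norm on `ℂ` in `hrecovery` is the one coming from `RCLike ℂ`
  exact hrecovery

theorem stmt8 {n d mn : ℕ} [NeZero n] (hn : n = 2 ^ mn) (hd : 1 ≤ d)
    (b mb F : ℕ) (hb : b = 2 ^ mb) (hbn : b ∣ n)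
    (M : Matrix (Fin d) (Fin d) (ZMod n)) (hM : Odd (Matrix.det M).val)
    (q : Fin d → ZMod n) (G : (Fin d → ZMod n) → ℝ)
    (x' : (Fin d → ZMod n) → ℂ) (i : Fin d → ZMod n)
    (hG : G (opos (n / b) M q i i) ≠ 0) :
    (∑ a : Fin d → ZMod n,
        ‖(((G (opos (n / b) M q i i) : ℝ) : ℂ)⁻¹ * fe n (-(fdot a (M.mulVec i))) *
              (∑ j, ((G (opos (n / b) M q i j) : ℝ) : ℂ) * x' j * fe n (fdot a (M.mulVec j)))
            - x' i)‖ ^ 2) / (n : ℝ) ^ d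
      = (G (opos (n / b) M q i i))⁻¹ ^ 2 *
          ∑ j ∈ univ.erase i, G (opos (n / b) M q i j) ^ 2 * ‖x' j‖ ^ 2 :=
  stmt8_general hn b M hM q G x' i hG
end

section
/- There are absolute constants c, C > 0 such that the following holds. Let X₁,…,X_n ≥ 0 be independent real random variables with E[X_i] ≤ μ for every i, where μ > 0, let γ ∈ (0,1), and let Y := quant^γ(X₁,…,X_n). Then E[ |Y − 4μ/γ|₊ ] ≤ C·(μ/γ)·2^{−c·γ·n}, where |a|₊ := max(a, 0). -/
/-!
If `Y > a := 4μ/γ`, then at least `k = ⌈γn⌉` of the `Xᵢ` are `≥ Y`, so for such a `k`-set `S`,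
`(Y - a)₊ ≤ Y ≤ a · ∏_{i ∈ S} Xᵢ / a`, and hence `(Y - a)₊ ≤ a · ∑_{|S| = k} ∏_{i ∈ S} Xᵢ / a`
always. By independence the right-hand side has expectation at most
`a · C(n, k) (μ/a)^k = a · C(n, k) (γ/4)^k ≤ a · (eγn/(4k))^k ≤ a · (e/4)^k ≤ a · 2^(-γn/2)`,
the last step because `e² < 8`.
-/

open MeasureTheory ProbabilityTheory

/-- the k-th largest element (1-indexed) of the values u₀,…,u_{m−1} -/
noncomputable def kthLargest {m : ℕ} (u : Fin m → ℝ) (k : ℕ) : ℝ :=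
  ((List.ofFn u).insertionSort (· ≤ ·)).getD (m - k) 0

/-- quant^f(u₁,…,u_m): the ⌈f·m⌉-th largest of the values -/
noncomputable def quant {m : ℕ} (f : ℝ) (u : Fin m → ℝ) : ℝ :=
  kthLargest u ⌈f * m⌉₊

theorem List.length_sub_le_countP_getElem_le {l : List ℝ} (hl : l.Pairwise (· ≤ ·))
    {i : ℕ} (hi : i < l.length) : l.length - i ≤ l.countP (fun x => l[i] ≤ x) := by
  calc l.length - i = (l.drop i).countP (fun x => l[i] ≤ x) := by
        rw [List.countP_eq_length.2, List.length_drop]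
        intro x hx
        obtain ⟨j, hj, rfl⟩ := List.getElem_of_mem hx
        rw [List.getElem_drop]
        simpa using hl.rel_get_of_le (a := ⟨i, hi⟩) (b := ⟨i + j, by grind⟩) (by simp)
    _ ≤ l.countP (fun x => l[i] ≤ x) := (List.drop_sublist i l).countP_le

theorem List.countP_ofFn {α : Type*} {n : ℕ} (u : Fin n → α) (p : α → Bool) :
    (List.ofFn u).countP p = (Finset.univ.filter fun i => p (u i)).card := by
  rw [List.ofFn_eq_map, List.countP_map, Finset.card_def, Finset.filter_val,
    ← Multiset.countP_eq_card_filter, Fin.univ_def]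
  convert (Multiset.coe_countP (fun i => p (u i)) _).symm
  simp

section kthLargest

variable {n : ℕ} (u : Fin n → ℝ)

theorem kthLargest_zero : kthLargest u 0 = 0 := by
  simp [kthLargest]

theorem le_card_filter_kthLargest_le {k : ℕ} (hkn : k ≤ n) :
    k ≤ (Finset.univ.filter fun i => kthLargest u k ≤ u i).card := by
  rcases Nat.eq_zero_or_pos k with rfl | hk
  · exact Nat.zero_le _
  set l := (List.ofFn u).insertionSort (· ≤ ·)
  have hlen : l.length = n := by simp [l]
  have hidx : n - k < l.length := by omega
  have hkth : kthLargest u k = l[n - k] := by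
    simp [kthLargest, l, List.getD_eq_getElem?_getD, List.getElem?_eq_getElem hidx]
  calc k = l.length - (n - k) := by omega
    _ ≤ l.countP (fun x => l[n - k] ≤ x) :=
        List.length_sub_le_countP_getElem_le (List.pairwise_insertionSort _ _) hidx
    _ = (List.ofFn u).countP (fun x => l[n - k] ≤ x) := (List.perm_insertionSort _ _).countP_eq _
    _ = _ := by rw [List.countP_ofFn, hkth]; simp

theorem exists_card_eq_forall_kthLargest_le {k : ℕ} (hkn : k ≤ n) :
    ∃ S : Finset (Fin n), S.card = k ∧ ∀ i ∈ S, kthLargest u k ≤ u i := by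
  obtain ⟨S, hS, hcard⟩ := Finset.exists_subset_card_eq (le_card_filter_kthLargest_le u hkn)
  exact ⟨S, hcard, fun i hi => (Finset.mem_filter.1 (hS hi)).2⟩

end kthLargest

theorem le_mul_prod_div_pow_of_le {ι : Type*} {S : Finset ι} {u : ι → ℝ} {a y : ℝ} (ha : 0 < a)
    (hay : a ≤ y) (hS : S.Nonempty) (hu : ∀ i ∈ S, y ≤ u i) :
    y ≤ a * (∏ i ∈ S, u i) / a ^ S.card := by
  obtain ⟨m, hm⟩ := Nat.exists_eq_add_one_of_ne_zero hS.card_pos.ne'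
  rw [le_div_iff₀ (by positivity), hm, pow_succ', mul_left_comm]
  gcongr
  calc y * a ^ m ≤ y * y ^ m := by gcongr; linarith
    _ = ∏ _i ∈ S, y := by rw [← pow_succ', ← hm, Finset.prod_const]
    _ ≤ ∏ i ∈ S, u i := Finset.prod_le_prod (fun _ _ => by linarith) hu

theorem max_kthLargest_sub_le_mul_sum_prod_div {n k : ℕ} {u : Fin n → ℝ} (hu : 0 ≤ u)
    (hkn : k ≤ n) {a : ℝ} (ha : 0 < a) :
    max (kthLargest u k - a) 0 ≤
      a * (∑ S ∈ Finset.powersetCard k Finset.univ, ∏ i ∈ S, u i) / a ^ k := by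
  have hprod_nonneg (T : Finset (Fin n)) : 0 ≤ ∏ i ∈ T, u i := Finset.prod_nonneg fun i _ => hu i
  rcases le_or_gt (kthLargest u k) a with hle | hlt
  · rw [max_eq_right (by linarith)]
    exact div_nonneg (mul_nonneg ha.le (Finset.sum_nonneg fun T _ => hprod_nonneg T))
      (by positivity)
  obtain ⟨S, rfl, hS⟩ := exists_card_eq_forall_kthLargest_le u hkn
  have hne : S.Nonempty := by
    rw [← Finset.card_pos, Nat.pos_iff_ne_zero]
    rintro hS0
    rw [hS0, kthLargest_zero] at hlt
    linarith
  have hsingle : ∏ i ∈ S, u i ≤ ∑ T ∈ Finset.powersetCard S.card Finset.univ, ∏ i ∈ T, u i :=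
    Finset.single_le_sum (f := fun T => ∏ i ∈ T, u i) (fun T _ => hprod_nonneg T)
      (Finset.mem_powersetCard.2 ⟨Finset.subset_univ S, rfl⟩)
  calc max (kthLargest u S.card - a) 0 ≤ kthLargest u S.card := by
        apply max_le <;> linarith
    _ ≤ a * (∏ i ∈ S, u i) / a ^ S.card := le_mul_prod_div_pow_of_le ha hlt.le hne hS
    _ ≤ _ := by gcongr

namespace ProbabilityTheory

variable {Ω ι : Type*} [MeasurableSpace Ω] {P : Measure Ω} {X : ι → Ω → ℝ}

theorem iIndepFun.integrable_finset_prod (hX : iIndepFun X P) (hmeas : ∀ i, Measurable (X i))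
    (hint : ∀ i, Integrable (X i) P) (S : Finset ι) :
    Integrable (fun ω => ∏ i ∈ S, X i ω) P := by
  have := hX.isProbabilityMeasure
  classical
  induction S using Finset.cons_induction with
  | empty => simp
  | cons i S hi ih =>
    have hindep : IndepFun (X i) (fun ω => ∏ j ∈ S, X j ω) P := by
      simpa only [Finset.prod_fn] using (hX.indepFun_finsetProd_of_notMem hmeas hi).symm
    simp only [Finset.prod_cons]
    exact hindep.integrable_mul (hint i) ih

theorem iIndepFun.integral_finset_prod (hX : iIndepFun X P)
    (hmeas : ∀ i, AEStronglyMeasurable (X i) P) (S : Finset ι) :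
    ∫ ω, ∏ i ∈ S, X i ω ∂P = ∏ i ∈ S, ∫ ω, X i ω ∂P := by
  have hXS : iIndepFun (fun i : S => X i) P := hX.precomp Subtype.val_injective
  simp_rw [← Finset.prod_coe_sort S]
  exact hXS.integral_fun_prod_eq_prod_integral (fun i => hmeas i)

theorem iIndepFun.integral_sum_powersetCard_prod_le [Fintype ι] (hX : iIndepFun X P)
    (hmeas : ∀ i, Measurable (X i)) (hint : ∀ i, Integrable (X i) P) (hX0 : ∀ i, 0 ≤ X i)
    {μ : ℝ} (hμ : ∀ i, ∫ ω, X i ω ∂P ≤ μ) (k : ℕ) :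
    ∫ ω, ∑ S ∈ Finset.powersetCard k Finset.univ, ∏ i ∈ S, X i ω ∂P
      ≤ (Fintype.card ι).choose k * μ ^ k := by
  rw [integral_finsetSum _ fun S _ => hX.integrable_finset_prod hmeas hint S]
  calc ∑ S ∈ Finset.powersetCard k Finset.univ, ∫ ω, ∏ i ∈ S, X i ω ∂P
      ≤ ∑ S ∈ Finset.powersetCard k Finset.univ, μ ^ k := by
        refine Finset.sum_le_sum fun S hS => ?_
        rw [hX.integral_finset_prod (fun i => (hmeas i).aestronglyMeasurable),
          ← (Finset.mem_powersetCard.1 hS).2, ← Finset.prod_const]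
        exact Finset.prod_le_prod (fun i _ => integral_nonneg (hX0 i)) fun i _ => hμ i
    _ = (Fintype.card ι).choose k * μ ^ k := by
        rw [Finset.sum_const, Finset.card_powersetCard, Finset.card_univ, nsmul_eq_mul]

end ProbabilityTheory

theorem Nat.choose_le_exp_mul_div_pow (n k : ℕ) :
    (n.choose k : ℝ) ≤ (Real.exp 1 * n / k) ^ k := by
  rcases Nat.eq_zero_or_pos k with rfl | hk
  · simp
  have hk' : (0 : ℝ) < (k : ℝ) ^ k := by positivity
  have hfact : (0 : ℝ) < k.factorial := by positivity
  have hkk : (k : ℝ) ^ k ≤ Real.exp 1 ^ k * k.factorial := by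
    have := Real.pow_div_factorial_le_exp (x := (k : ℝ)) (by positivity) k
    rwa [← Real.exp_one_pow, div_le_iff₀ hfact] at this
  rw [div_pow, mul_pow, le_div_iff₀ hk']
  calc (n.choose k : ℝ) * k ^ k ≤ n ^ k / k.factorial * (Real.exp 1 ^ k * k.factorial) :=
        mul_le_mul (Nat.choose_le_pow_div k n) hkk (by positivity) (by positivity)
    _ = Real.exp 1 ^ k * n ^ k := by field_simp

theorem Real.exp_one_div_four_le : Real.exp 1 / 4 ≤ (2 : ℝ) ^ (-(1 / 2) : ℝ) := by
  calc Real.exp 1 / 4 = √((Real.exp 1 / 4) ^ 2) := (Real.sqrt_sq (by positivity)).symm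
    _ ≤ √(2⁻¹) := Real.sqrt_le_sqrt (by nlinarith [Real.exp_one_lt_d9, Real.exp_pos 1])
    _ = (2 : ℝ) ^ (-(1 / 2) : ℝ) := by
        rw [Real.sqrt_eq_rpow, Real.inv_rpow (by norm_num), Real.rpow_neg (by norm_num)]

theorem choose_mul_pow_le_two_rpow {n k : ℕ} {γ : ℝ} (hγ : 0 ≤ γ) (hk : γ * n ≤ k) :
    (n.choose k : ℝ) * (γ / 4) ^ k ≤ 2 ^ (-(1 / 2 * γ * n)) := by
  have hratio : Real.exp 1 * n * γ / (4 * k) ≤ Real.exp 1 / 4 := by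
    rcases Nat.eq_zero_or_pos k with rfl | hk0
    · simp only [CharP.cast_eq_zero, mul_zero, div_zero]; positivity
    rw [div_le_div_iff₀ (by positivity) (by norm_num)]
    nlinarith [Real.exp_pos 1]
  calc (n.choose k : ℝ) * (γ / 4) ^ k ≤ (Real.exp 1 * n / k) ^ k * (γ / 4) ^ k := by
        gcongr; exact Nat.choose_le_exp_mul_div_pow n k
    _ = (Real.exp 1 * n * γ / (4 * k)) ^ k := by rw [← mul_pow]; ring_nf
    _ ≤ ((2 : ℝ) ^ (-(1 / 2) : ℝ)) ^ k := by
        gcongr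
        exact hratio.trans Real.exp_one_div_four_le
    _ = 2 ^ (-(1 / 2 * k) : ℝ) := by
        rw [← Real.rpow_natCast, ← Real.rpow_mul (by norm_num)]; ring_nf
    _ ≤ 2 ^ (-(1 / 2 * γ * n)) := by
        apply Real.rpow_le_rpow_of_exponent_le (by norm_num); linarith

theorem stmt15 :
    ∃ c C : ℝ, 0 < c ∧ 0 < C ∧
      ∀ (Ω : Type) [MeasurableSpace Ω] (P : Measure Ω) [IsProbabilityMeasure P]
        (n : ℕ) (X : Fin n → Ω → ℝ) (μ γ : ℝ),
        0 < μ → γ ∈ Set.Ioo (0 : ℝ) 1 →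
        (∀ i, Measurable (X i)) →
        (∀ i ω, 0 ≤ X i ω) →
        iIndepFun X P →
        (∀ i, Integrable (X i) P) →
        (∀ i, ∫ ω, X i ω ∂P ≤ μ) →
        ∫ ω, max (quant γ (fun i => X i ω) - 4 * μ / γ) 0 ∂P
          ≤ C * (μ / γ) * 2 ^ (-(c * γ * n)) := by
  refine ⟨1 / 2, 4, by norm_num, by norm_num, ?_⟩
  intro Ω _ P _ n X μ γ hμ ⟨hγ0, hγ1⟩ hmeas hX0 hX hint hXμ
  set a := 4 * μ / γ with ha_def
  set k := ⌈γ * n⌉₊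
  have ha : 0 < a := by positivity
  have hμa : μ / a = γ / 4 := by rw [ha_def]; field_simp
  have hγn : γ * n ≤ k := Nat.le_ceil _
  have hkn : k ≤ n := Nat.ceil_le.2 (by nlinarith [(Nat.cast_nonneg n : (0 : ℝ) ≤ n)])
  have hsum := hX.integral_sum_powersetCard_prod_le hmeas hint (fun i ω => hX0 i ω) hXμ k
  rw [Fintype.card_fin] at hsum
  calc ∫ ω, max (quant γ (fun i => X i ω) - a) 0 ∂P
      ≤ ∫ ω, a * (∑ S ∈ Finset.powersetCard k Finset.univ, ∏ i ∈ S, X i ω) / a ^ k ∂P :=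
        integral_mono_of_nonneg (ae_of_all _ fun ω => le_max_right _ _)
          (((integrable_finsetSum _ fun S _ =>
            hX.integrable_finset_prod hmeas hint S).const_mul a).div_const _)
          (ae_of_all _ fun ω => max_kthLargest_sub_le_mul_sum_prod_div (fun i => hX0 i ω) hkn ha)
    _ ≤ a * (n.choose k * μ ^ k) / a ^ k := by
        rw [integral_div, integral_const_mul]; gcongr
    _ = a * (n.choose k * (γ / 4) ^ k) := by
        rw [mul_div_assoc, mul_div_assoc, ← div_pow, hμa]
    _ ≤ a * 2 ^ (-(1 / 2 * γ * n)) := by gcongr; exact choose_mul_pow_le_two_rpow hγ0.le hγn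
    _ = 4 * (μ / γ) * 2 ^ (-(1 / 2 * γ * n)) := by ring
end
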